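/- arXiv:1611.01415 — 4 statements merged into one kernel-verified Lean document; each statement's English description precedes it below -/
import Mathlib

section
/- Let K be an arbitrary field, let P(X,Y) ∈ K[[X,Y]] be a formal power series in two variables, and let f(X) ∈ K[[X]] be a formal power series with f(0) = 0 satisfying P(X, f(X)) = f(X) and P'_Y(0,0) = 0 (the coefficient of Y in P is 0). Then for every n ≥ 0, the coefficient of X^n in f equals the sum over m ≥ 1 of the coefficient of X^n Y^{m-1} in (1 − P'_Y(X,Y))·P(X,Y)^m, where this sum has only finitely many nonzero terms. -/
/-- Formal partial derivative of a two-variable power series with respect to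
`Y` (variable `1`): the coefficient of `X^i Y^j` is `(j+1)` times the
coefficient of `X^i Y^(j+1)` in `P`. -/
noncomputable def pderivY {K : Type*} [Field K] (P : MvPowerSeries (Fin 2) K) :
    MvPowerSeries (Fin 2) K :=
  fun d => ((d 1 + 1 : ℕ) : K) *
    MvPowerSeries.coeff (d + Finsupp.single 1 1) P

/-- Substitution of `f(X)` for `Y` in `P(X,Y)`: the series `P(X, f(X))`,
well defined (given coefficientwise) when `f` has zero constant term. -/
noncomputable def substY {K : Type*} [Field K] (P : MvPowerSeries (Fin 2) K)
    (f : PowerSeries K) : PowerSeries K :=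
  PowerSeries.mk fun n => ∑ i ∈ Finset.range (n + 1), ∑ j ∈ Finset.range (n + 1),
    MvPowerSeries.coeff (Finsupp.single 0 i + Finsupp.single 1 j) P *
      PowerSeries.coeff (n - i) (f ^ j)

/-!
Write `diagSum P j n = ∑ₖ [Xⁿ Yᵏ] ((1 - P'_Y) P^(k+j))`; we show that it equals `[Xⁿ] f ^ j` for
every `j`, the theorem being the case `j = 1`. Giving `X` weight 2 and `Y` weight 1, the hypotheses
say that `P` has weighted order at least 2, so `diagSum P j n` is a finite sum which vanishes when
`2n < j`, as `[Xⁿ] f ^ j` does. At `j = 0` both are `[n = 0]`: for `diagSum` the sum telescopes,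
because `[Yᵏ] (P'_Y Pᵏ) = [Yᵏ⁺¹] Pᵏ⁺¹` (the derivative of `Pᵏ⁺¹` is `(k + 1) P'_Y Pᵏ`). Finally
both satisfy the same recursion in `j`, coming from `f ^ (j + 1) = f ^ j · P(X, f)` and
`P^(k+j+1) = P · P^(k+j)`, and a recursion of this shape has only one solution vanishing for
`2n < j` (induction on `2n - j`).
-/

open MvPowerSeries Finset

namespace MvPowerSeries

variable {σ R : Type*} [CommRing R]

theorem map_pderiv {S : Type*} [CommRing S] (φ : R →+* S) (i : σ) (f : MvPowerSeries σ R) :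
    map φ (pderiv R i f) = pderiv S i (map φ f) := by
  ext d
  simp [coeff_pderiv]

theorem coeff_pow_succ_eq_coeff_pderiv_mul_pow_of_isAddTorsionFree [IsAddTorsionFree R]
    (i : σ) (f : MvPowerSeries σ R) (d : σ →₀ ℕ) :
    coeff (d + Finsupp.single i 1) (f ^ (d i + 1)) = coeff d (pderiv R i f * f ^ d i) := by
  have h := congrArg (coeff d) (pderiv_pow (R := R) (i := i) f (d i + 1))
  rw [coeff_pderiv, Nat.add_sub_cancel, mul_assoc, mul_comm (f ^ d i), ← map_natCast (C (σ := σ)),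
    coeff_C_mul, mul_comm, ← Nat.cast_succ, ← nsmul_eq_mul, ← nsmul_eq_mul] at h
  exact nsmul_right_injective (Nat.succ_ne_zero _) h

/-- Both sides are polynomials with integer coefficients in the coefficients of `f`, so it is
enough to treat the generic series over `ℤ[(Xₑ)ₑ]`, which is torsion free. -/
theorem coeff_pow_succ_eq_coeff_pderiv_mul_pow (i : σ) (f : MvPowerSeries σ R) (d : σ →₀ ℕ) :
    coeff (d + Finsupp.single i 1) (f ^ (d i + 1)) = coeff d (pderiv R i f * f ^ d i) := by
  let generic : MvPowerSeries σ (MvPolynomial (σ →₀ ℕ) ℤ) := fun e => MvPolynomial.X e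
  let φ := MvPolynomial.eval₂Hom (Int.castRingHom R) (fun e => coeff e f)
  have hf : map φ generic = f := by
    ext e
    exact MvPolynomial.eval₂Hom_X' _ _ e
  have h := congrArg φ (coeff_pow_succ_eq_coeff_pderiv_mul_pow_of_isAddTorsionFree i generic d)
  rwa [← coeff_map, ← coeff_map, (map φ).map_pow, (map φ).map_mul, (map φ).map_pow, map_pderiv,
    hf] at h

theorem coeff_mul_pow_eq_zero_of_weight_lt {w : σ → ℕ} {P : MvPowerSeries σ R} {n : ℕ}
    (hP : n ≤ P.weightedOrder w) (G : MvPowerSeries σ R) {m : ℕ} {d : σ →₀ ℕ}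
    (hd : Finsupp.weight w d < m * n) : coeff d (G * P ^ m) = 0 := by
  apply coeff_eq_zero_of_lt_weightedOrder w
  calc (Finsupp.weight w d : ℕ∞) < m • (n : ℕ∞) := by rw [nsmul_eq_mul]; exact_mod_cast hd
    _ ≤ G.weightedOrder w + m • P.weightedOrder w := by grw [hP]; exact le_add_self
    _ ≤ _ := by grw [le_weightedOrder_pow, le_weightedOrder_mul]

end MvPowerSeries

theorem PowerSeries.coeff_pow_eq_zero_of_lt {R : Type*} [Semiring R] {f : PowerSeries R}
    (hf : constantCoeff f = 0) {n j : ℕ} (h : n < j) : coeff n (f ^ j) = 0 :=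
  coeff_of_lt_order n ((Nat.cast_lt.2 h).trans_le (le_order_pow_of_constantCoeff_eq_zero j hf))

theorem Finset.sum_range_sum_antidiagonal {M : Type*} [AddCommMonoid M] (N : ℕ)
    (F : ℕ × ℕ → M) :
    ∑ k ∈ range N, ∑ q ∈ antidiagonal k, F q = ∑ b ∈ range N, ∑ l ∈ range (N - b), F (b, l) := by
  simp only [Nat.sum_antidiagonal_eq_sum_range_succ_mk, range_eq_Ico]
  rw [← sum_Ico_Ico_comm]
  refine sum_congr rfl fun b _ => ?_
  rw [sum_Ico_eq_sum_range]
  simp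

section
variable {M : Type*} [Semiring M]

/-- The relations satisfied by `g j n = [Xⁿ] f ^ j` when `f = ∑ c a b Xᵃ fᵇ`, `f(0) = 0`. -/
structure IsPowCoeffs (c g : ℕ → ℕ → M) : Prop where
  zero : ∀ n, g 0 n = if n = 0 then 1 else 0
  eq_zero_of_lt : ∀ j n, 2 * n < j → g j n = 0
  succ : ∀ j n,
    g (j + 1) n = ∑ p ∈ antidiagonal n, ∑ b ∈ range (2 * n + 1), c p.1 b * g (j + b) p.2

theorem IsPowCoeffs.unique {c g h : ℕ → ℕ → M} (hc : ∀ a b, 2 * a + b < 2 → c a b = 0)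
    (hg : IsPowCoeffs c g) (hh : IsPowCoeffs c h) : g = h := by
  suffices ∀ N j n, 2 * n < j + N → g j n = h j n from
    funext fun j => funext fun n => this (2 * n + 1) j n (by omega)
  intro N
  induction N with
  | zero => intro j n hjn; rw [hg.eq_zero_of_lt j n hjn, hh.eq_zero_of_lt j n hjn]
  | succ N ih =>
    rintro (_ | j) n hjn
    · rw [hg.zero, hh.zero]
    rw [hg.succ, hh.succ]
    refine sum_congr rfl fun ⟨a, m⟩ ham => sum_congr rfl fun b _ => ?_
    rw [HasAntidiagonal.mem_antidiagonal] at ham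
    by_cases hab : 2 * a + b < 2
    · rw [hc a b hab, zero_mul, zero_mul]
    · rw [ih (j + b) m (by omega)]

end

noncomputable def bideg (a b : ℕ) : Fin 2 →₀ ℕ := Finsupp.single 0 a + Finsupp.single 1 b

@[simp] theorem bideg_apply_zero (a b : ℕ) : bideg a b 0 = a := by simp [bideg]

@[simp] theorem bideg_apply_one (a b : ℕ) : bideg a b 1 = b := by simp [bideg]

theorem eq_bideg (e : Fin 2 →₀ ℕ) : e = bideg (e 0) (e 1) := by
  ext i; fin_cases i <;> simp

theorem bideg_add_bideg (a b a' b' : ℕ) :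
    bideg a b + bideg a' b' = bideg (a + a') (b + b') := by
  ext i; fin_cases i <;> simp

theorem bideg_add_single_one (a b : ℕ) : bideg a b + Finsupp.single 1 1 = bideg a (b + 1) := by
  rw [bideg, bideg, add_assoc, ← Finsupp.single_add]

theorem bideg_eq_zero_iff {a b : ℕ} : bideg a b = 0 ↔ a = 0 ∧ b = 0 := by
  simp [bideg]

def xyWeight : Fin 2 → ℕ := ![2, 1]

theorem weight_bideg (a b : ℕ) : Finsupp.weight xyWeight (bideg a b) = 2 * a + b := by
  simp [bideg, xyWeight, Finsupp.weight_single, mul_comm]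

section
variable {R : Type*} [CommRing R]

theorem coeff_bideg_mul (P Q : MvPowerSeries (Fin 2) R) (n k : ℕ) :
    coeff (bideg n k) (P * Q) = ∑ p ∈ antidiagonal n, ∑ q ∈ antidiagonal k,
      coeff (bideg p.1 q.1) P * coeff (bideg p.2 q.2) Q := by
  rw [coeff_mul, ← sum_product']
  refine sum_nbij' (fun u => ((u.1 0, u.2 0), (u.1 1, u.2 1)))
    (fun r => (bideg r.1.1 r.2.1, bideg r.1.2 r.2.2)) ?_ ?_ ?_ ?_ ?_
  · rintro ⟨u, v⟩ huv
    rw [HasAntidiagonal.mem_antidiagonal] at huv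
    simp [← Finsupp.add_apply, huv]
  · rintro ⟨⟨a, a'⟩, ⟨b, b'⟩⟩ h
    simp only [mem_product, HasAntidiagonal.mem_antidiagonal] at h
    simp [bideg_add_bideg, h.1, h.2]
  · rintro ⟨u, v⟩ _
    simp only [Prod.mk.injEq]
    exact ⟨(eq_bideg u).symm, (eq_bideg v).symm⟩
  · rintro ⟨⟨a, a'⟩, ⟨b, b'⟩⟩ _
    simp
  · rintro ⟨u, v⟩ _
    rw [← eq_bideg, ← eq_bideg]

noncomputable def coeffY (P : MvPowerSeries (Fin 2) R) (b : ℕ) : PowerSeries R :=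
  PowerSeries.mk fun a => coeff (bideg a b) P

theorem two_le_weightedOrder_xyWeight {P : MvPowerSeries (Fin 2) R} (h0 : constantCoeff P = 0)
    (h1 : coeff (Finsupp.single 1 1) P = 0) : 2 ≤ P.weightedOrder xyWeight := by
  refine nat_le_weightedOrder (n := 2) xyWeight fun d hd => ?_
  rw [eq_bideg d, weight_bideg] at hd
  obtain ⟨hd0, hd1 | hd1⟩ : d 0 = 0 ∧ (d 1 = 0 ∨ d 1 = 1) := by omega
  · rw [eq_bideg d, hd0, hd1, bideg_eq_zero_iff.2 ⟨rfl, rfl⟩, coeff_zero_eq_constantCoeff_apply,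
      h0]
  · rwa [eq_bideg d, hd0, hd1, bideg, Finsupp.single_zero, zero_add]

noncomputable def diagSum (P : MvPowerSeries (Fin 2) R) (j n : ℕ) : R :=
  ∑ᶠ k, coeff (bideg n k) ((1 - pderiv R 1 P) * P ^ (k + j))

variable {P : MvPowerSeries (Fin 2) R} (hP : 2 ≤ P.weightedOrder xyWeight)
include hP

theorem coeff_bideg_eq_zero_of_lt {a b : ℕ} (h : 2 * a + b < 2) : coeff (bideg a b) P = 0 :=
  coeff_eq_zero_of_lt_weightedOrder xyWeight
    (by rw [weight_bideg]; exact (Nat.cast_lt.2 h).trans_le hP)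

theorem coeff_bideg_mul_pow_eq_zero (G : MvPowerSeries (Fin 2) R) {n k m : ℕ}
    (h : 2 * n + k < m * 2) : coeff (bideg n k) (G * P ^ m) = 0 :=
  coeff_mul_pow_eq_zero_of_weight_lt hP G (by rwa [weight_bideg])

theorem support_diagSum_subset {j n N : ℕ} (hN : 2 * n < N + 2 * j) :
    (Function.support fun k => coeff (bideg n k) ((1 - pderiv R 1 P) * P ^ (k + j))) ⊆
      range N := fun k hk => by
  by_contra hkN
  rw [coe_range, Set.mem_Iio] at hkN
  exact hk (coeff_bideg_mul_pow_eq_zero hP _ (by omega))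

theorem diagSum_eq_sum_range {j n N : ℕ} (hN : 2 * n < N + 2 * j) :
    diagSum P j n = ∑ k ∈ range N, coeff (bideg n k) ((1 - pderiv R 1 P) * P ^ (k + j)) :=
  finsum_eq_sum_of_support_subset _ (support_diagSum_subset hP hN)

theorem diagSum_zero (n : ℕ) : diagSum P 0 n = if n = 0 then 1 else 0 := by
  have telescope : ∀ k, coeff (bideg n k) ((1 - pderiv R 1 P) * P ^ (k + 0)) =
      coeff (bideg n k) (P ^ k) - coeff (bideg n (k + 1)) (P ^ (k + 1)) := fun k => by
    have key := coeff_pow_succ_eq_coeff_pderiv_mul_pow 1 P (bideg n k)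
    rw [bideg_add_single_one, bideg_apply_one] at key
    rw [add_zero, sub_mul, one_mul, map_sub, key]
  have hlast : coeff (bideg n (2 * n + 1)) (P ^ (2 * n + 1)) = 0 := by
    simpa using coeff_bideg_mul_pow_eq_zero hP 1 (n := n) (k := 2 * n + 1) (m := 2 * n + 1)
      (by omega)
  rw [diagSum_eq_sum_range hP (N := 2 * n + 1) (by omega), sum_congr rfl fun k _ => telescope k,
    sum_range_sub', hlast, sub_zero, pow_zero, coeff_one]
  simp [bideg_eq_zero_iff]

theorem diagSum_succ (j n : ℕ) :
    diagSum P (j + 1) n = ∑ p ∈ antidiagonal n, ∑ b ∈ range (2 * n + 1),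
      coeff (bideg p.1 b) P * diagSum P (j + b) p.2 := by
  have hsplit : ∀ k, coeff (bideg n k) ((1 - pderiv R 1 P) * P ^ (k + (j + 1))) =
      ∑ p ∈ antidiagonal n, ∑ q ∈ antidiagonal k, coeff (bideg p.1 q.1) P *
        coeff (bideg p.2 q.2) ((1 - pderiv R 1 P) * P ^ (k + j)) := fun k => by
    rw [← coeff_bideg_mul, ← add_assoc, pow_succ]
    congr 1
    ring
  rw [diagSum_eq_sum_range hP (N := 2 * n + 1) (by omega), sum_congr rfl fun k _ => hsplit k,
    sum_comm]
  refine sum_congr rfl fun ⟨a, m⟩ ham => ?_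
  rw [HasAntidiagonal.mem_antidiagonal] at ham
  calc _ = ∑ k ∈ range (2 * n + 1), ∑ q ∈ antidiagonal k, coeff (bideg a q.1) P *
        coeff (bideg m q.2) ((1 - pderiv R 1 P) * P ^ (q.2 + (j + q.1))) := by
        refine sum_congr rfl fun k _ => sum_congr rfl fun q hq => ?_
        rw [HasAntidiagonal.mem_antidiagonal] at hq
        rw [← hq, show q.1 + q.2 + j = q.2 + (j + q.1) by ring]
    _ = _ := by
        rw [sum_range_sum_antidiagonal]
        refine sum_congr rfl fun b hb => ?_
        rw [mem_range] at hb
        rw [diagSum_eq_sum_range hP (N := 2 * n + 1 - b) (by omega), mul_sum]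

theorem isPowCoeffs_diagSum : IsPowCoeffs (fun a b => coeff (bideg a b) P) (diagSum P) where
  zero := diagSum_zero hP
  eq_zero_of_lt j n h := by rw [diagSum_eq_sum_range hP (N := 0) (by omega), sum_range_zero]
  succ := diagSum_succ hP

end

section
variable {K : Type*} [Field K] {P : MvPowerSeries (Fin 2) K} {f : PowerSeries K}

theorem pderivY_eq_pderiv (P : MvPowerSeries (Fin 2) K) : pderivY P = pderiv K 1 P := by
  ext d
  rw [coeff_pderiv]
  show ((d 1 + 1 : ℕ) : K) * _ = _
  push_cast
  ring

variable (hf0 : PowerSeries.constantCoeff f = 0)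
include hf0

theorem coeff_substY {n B : ℕ} (hB : n < B) :
    PowerSeries.coeff n (substY P f) =
      PowerSeries.coeff n (∑ b ∈ range B, coeffY P b * f ^ b) := by
  simp only [substY, PowerSeries.coeff_mk, map_sum, PowerSeries.coeff_mul, coeffY]
  conv_rhs => rw [sum_comm, Nat.sum_antidiagonal_eq_sum_range_succ_mk]
  refine sum_congr rfl fun i hi => ?_
  rw [mem_range] at hi
  refine sum_subset (range_subset_range.2 (by omega)) fun b _ hb => ?_
  rw [mem_range] at hb
  rw [PowerSeries.coeff_pow_eq_zero_of_lt hf0 (by omega), mul_zero]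

variable (hPf : substY P f = f)
include hPf

theorem constantCoeff_eq_zero_of_substY_eq : constantCoeff P = 0 := by
  simpa [substY, hf0] using congrArg (PowerSeries.coeff 0) hPf

theorem coeff_pow_succ_of_substY_eq (j n : ℕ) :
    PowerSeries.coeff n (f ^ (j + 1)) = ∑ p ∈ antidiagonal n, ∑ b ∈ range (2 * n + 1),
      coeff (bideg p.1 b) P * PowerSeries.coeff p.2 (f ^ (j + b)) := by
  set Q := ∑ b ∈ range (2 * n + 1), coeffY P b * f ^ b
  have hQ : ∀ p ∈ antidiagonal n, PowerSeries.coeff p.1 f = PowerSeries.coeff p.1 Q :=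
    fun p hp => by
      rw [HasAntidiagonal.mem_antidiagonal] at hp
      rw [← coeff_substY hf0 (by omega), hPf]
  calc PowerSeries.coeff n (f ^ (j + 1)) = PowerSeries.coeff n (Q * f ^ j) := by
        rw [pow_succ', PowerSeries.coeff_mul, PowerSeries.coeff_mul]
        exact sum_congr rfl fun p hp => by rw [hQ p hp]
    _ = ∑ b ∈ range (2 * n + 1), PowerSeries.coeff n (coeffY P b * f ^ (j + b)) := by
        rw [sum_mul, map_sum]
        exact sum_congr rfl fun b _ => by rw [mul_assoc, ← pow_add, add_comm]
    _ = _ := by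
        simp only [PowerSeries.coeff_mul, coeffY, PowerSeries.coeff_mk]
        exact sum_comm

theorem isPowCoeffs_coeff_pow :
    IsPowCoeffs (fun a b => coeff (bideg a b) P) (fun j n => PowerSeries.coeff n (f ^ j)) where
  zero n := by rw [pow_zero, PowerSeries.coeff_one]
  eq_zero_of_lt j n h := PowerSeries.coeff_pow_eq_zero_of_lt hf0 (by omega)
  succ := coeff_pow_succ_of_substY_eq hf0 hPf

end

/-- **Explicit implicit function theorem over an arbitrary field.**
If `f(0) = 0`, `P(X, f(X)) = f(X)` and `P'_Y(0,0) = 0`, then for every `n`,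
`[Xⁿ] f = ∑_{m ≥ 1} [Xⁿ Y^(m-1)] ((1 - P'_Y(X,Y)) · P(X,Y)^m)`,
the sum (indexed below by `k = m - 1`) having finite support. -/
theorem implicit_coeff_formula_arbitrary_field {K : Type*} [Field K]
    (P : MvPowerSeries (Fin 2) K) (f : PowerSeries K)
    (hf0 : PowerSeries.constantCoeff f = 0)
    (hPf : substY P f = f)
    (hPY : MvPowerSeries.coeff (Finsupp.single 1 1) P = 0) :
    ∀ n : ℕ,
      (Function.support fun k : ℕ =>
        MvPowerSeries.coeff (Finsupp.single 0 n + Finsupp.single 1 k)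
          ((1 - pderivY P) * P ^ (k + 1))).Finite ∧
      PowerSeries.coeff n f =
        ∑ᶠ k : ℕ,
          MvPowerSeries.coeff (Finsupp.single 0 n + Finsupp.single 1 k)
            ((1 - pderivY P) * P ^ (k + 1)) := by
  intro n
  have hP := two_le_weightedOrder_xyWeight (constantCoeff_eq_zero_of_substY_eq hf0 hPf) hPY
  have hpow : (fun j n => PowerSeries.coeff n (f ^ j)) = diagSum P :=
    (isPowCoeffs_coeff_pow hf0 hPf).unique (fun _ _ => coeff_bideg_eq_zero_of_lt hP)
      (isPowCoeffs_diagSum hP)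
  rw [pderivY_eq_pderiv]
  refine ⟨(range (2 * n + 1)).finite_toSet.subset (support_diagSum_subset hP (by omega)), ?_⟩
  rw [← pow_one f]
  exact congrFun (congrFun hpow 1) n
end

section
/- (Lagrange inversion formula over an arbitrary field.) Let K be an arbitrary field, let φ(Y) ∈ K[[Y]] be a formal power series with φ(0) ≠ 0, and let f(X) ∈ K[[X]] satisfy f(0) = 0 and f(X) = X·φ(f(X)). Then for every n ≥ 1, the coefficient of X^n in f equals the coefficient of Y^{n-1} in φ(Y)^n − Y·φ'(Y)·φ(Y)^{n-1}. -/
/-- Composition `φ(f(X))` of one-variable power series, well defined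
(given coefficientwise) when `f` has zero constant term. -/
noncomputable def comp1 {K : Type*} [Field K] (φ f : PowerSeries K) : PowerSeries K :=
  PowerSeries.mk fun n => ∑ j ∈ Finset.range (n + 1),
    PowerSeries.coeff j φ * PowerSeries.coeff n (f ^ j)

/-!
Write `f = X u` with `u = φ(f)`, a unit, and `w = u⁻¹`, so that `(X/f)^(r+1) = w^(r+1)`.
The residue of `f'/f^(r+1)` is `1` for `r = 0` and vanishes otherwise, being the residue of the
derivative of `-f^(-r)/r`; in coefficients this is `[X^(m+1)] v^(m+1) = [X^m] v' v^m`, which holds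
over every commutative ring because it holds for the generic series over the torsion-free ring
`ℤ[X₀, X₁, …]`. Expanding `H(f)` in powers of `f` then gives the change of variables
`[X^k] H(f) f' w^(k+1) = [Y^k] H`. For `H = φⁿ - Y φ' φ^(n-1)` the chain rule gives
`H(f) f' = u^(n+1)`, hence `[Y^(n-1)] H = [X^(n-1)] u = [Xⁿ] f`.
-/

open Finset

namespace PowerSeries

section Residue

variable {R : Type*} [CommRing R]

theorem coeff_succ_pow_succ_eq_coeff_derivative_mul_pow_of_isAddTorsionFree
    [IsAddTorsionFree R] (v : R⟦X⟧) (m : ℕ) :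
    coeff (m + 1) (v ^ (m + 1)) = coeff m (d⁄dX R v * v ^ m) := by
  have h := congrArg (coeff m) (derivative_pow v (m + 1))
  rw [coeff_derivative, add_tsub_cancel_right, mul_assoc, mul_comm (v ^ m), ← nsmul_eq_mul,
    map_nsmul] at h
  refine nsmul_right_injective (M := R) m.succ_ne_zero ?_
  simp only [nsmul_eq_mul, Nat.cast_succ] at h ⊢
  linear_combination h

theorem map_derivative {S : Type*} [CommRing S] (g : R →+* S) (v : R⟦X⟧) :
    map g (d⁄dX R v) = d⁄dX S (map g v) := by
  ext n
  simp [coeff_derivative]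

theorem coeff_succ_pow_succ_eq_coeff_derivative_mul_pow (v : R⟦X⟧) (m : ℕ) :
    coeff (m + 1) (v ^ (m + 1)) = coeff m (d⁄dX R v * v ^ m) := by
  let ψ : (MvPolynomial ℕ ℤ)⟦X⟧ := mk MvPolynomial.X
  let e : MvPolynomial ℕ ℤ →+* R := MvPolynomial.eval₂Hom (Int.castRingHom R) (coeff · v)
  have hψ : map e ψ = v := by
    ext n
    simp [ψ, e, coeff_map]
  simp only [← hψ, ← map_derivative, ← map_pow, ← map_mul, coeff_map,
    coeff_succ_pow_succ_eq_coeff_derivative_mul_pow_of_isAddTorsionFree]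

theorem derivative_X_mul (u : R⟦X⟧) : d⁄dX R (X * u) = u + X * d⁄dX R u := by
  rw [Derivation.leibniz, derivative_X, smul_eq_mul, smul_eq_mul]
  ring

theorem coeff_derivative_mul_pow_succ {f u w : R⟦X⟧} (hf : f = X * u) (huw : u * w = 1)
    (r : ℕ) : coeff r (d⁄dX R f * w ^ (r + 1)) = if r = 0 then 1 else 0 := by
  have hsplit : d⁄dX R f * w ^ (r + 1) = w ^ r + X * (d⁄dX R u * w ^ (r + 1)) := by
    rw [hf, derivative_X_mul]
    linear_combination w ^ r * huw
  rcases r with _ | s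
  · rw [hsplit]
    simp
  · have hdw : d⁄dX R u * w + u * d⁄dX R w = 0 := by
      have h := congrArg (d⁄dX R) huw
      rw [Derivation.leibniz, Derivation.map_one_eq_zero, smul_eq_mul, smul_eq_mul] at h
      linear_combination h
    have hdu : d⁄dX R u * w ^ (s + 2) = -(d⁄dX R w * w ^ s) := by
      linear_combination w ^ (s + 1) * hdw - d⁄dX R w * w ^ s * huw
    rw [hsplit, hdu, map_add, coeff_succ_X_mul, map_neg,
      ← coeff_succ_pow_succ_eq_coeff_derivative_mul_pow]
    simp

theorem coeff_pow_mul_derivative_mul_pow_succ {f u w : R⟦X⟧} (hf : f = X * u)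
    (huw : u * w = 1) {m k : ℕ} (hmk : m ≤ k) :
    coeff k (f ^ m * (d⁄dX R f * w ^ (k + 1))) = if m = k then 1 else 0 := by
  obtain ⟨r, rfl⟩ := Nat.exists_eq_add_of_le' hmk
  have hpow : u ^ m * w ^ m = 1 := by rw [← mul_pow, huw, one_pow]
  have hshift : f ^ m * (d⁄dX R f * w ^ (r + m + 1)) = X ^ m * (d⁄dX R f * w ^ (r + 1)) := by
    rw [hf, mul_pow]
    linear_combination X ^ m * d⁄dX R (X * u) * w ^ (r + 1) * hpow
  rw [hshift, coeff_X_pow_mul, coeff_derivative_mul_pow_succ hf huw]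
  simp

end Residue

section Substitution

variable {R : Type*} [CommRing R]

theorem coeff_pow_of_constantCoeff_eq_zero_of_lt {f : R⟦X⟧} (hf : constantCoeff f = 0)
    {n m : ℕ} (h : n < m) : coeff n (f ^ m) = 0 :=
  X_pow_dvd_iff.mp (pow_dvd_pow_of_dvd (X_dvd_iff.mpr hf) m) n h

theorem coeff_subst_eq_sum_range {f : R⟦X⟧} (hf : constantCoeff f = 0) (H : R⟦X⟧)
    {n N : ℕ} (h : n < N) :
    coeff n (H.subst f) = ∑ m ∈ range N, coeff m H * coeff n (f ^ m) := by
  rw [coeff_subst' (HasSubst.of_constantCoeff_zero' hf), finsum_eq_sum_of_support_subset]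
  · rfl
  · intro m hm
    by_contra hmN
    rw [coe_range, Set.mem_Iio, not_lt] at hmN
    exact hm (by simp [coeff_pow_of_constantCoeff_eq_zero_of_lt hf (h.trans_le hmN)])

theorem constantCoeff_subst_of_constantCoeff_eq_zero {f : R⟦X⟧} (hf : constantCoeff f = 0)
    (H : R⟦X⟧) : constantCoeff (H.subst f) = constantCoeff H := by
  rw [← coeff_zero_eq_constantCoeff_apply, coeff_subst_eq_sum_range hf H zero_lt_one,
    sum_range_one, pow_zero, coeff_zero_one, mul_one, coeff_zero_eq_constantCoeff_apply]

theorem coeff_subst_mul {f : R⟦X⟧} (hf : constantCoeff f = 0) (H g : R⟦X⟧) (k : ℕ) :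
    coeff k (H.subst f * g) = ∑ m ∈ range (k + 1), coeff m H * coeff k (f ^ m * g) := by
  calc coeff k (H.subst f * g)
      = ∑ p ∈ antidiagonal k, ∑ m ∈ range (k + 1),
          coeff m H * (coeff p.1 (f ^ m) * coeff p.2 g) := by
        rw [coeff_mul]
        refine sum_congr rfl fun p hp => ?_
        rw [coeff_subst_eq_sum_range hf H (Nat.antidiagonal.fst_lt hp), sum_mul]
        simp only [mul_assoc]
    _ = _ := by
        rw [sum_comm]
        simp only [coeff_mul, mul_sum]

theorem coeff_subst_mul_derivative_mul_pow_succ {f u w : R⟦X⟧} (hf : f = X * u)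
    (huw : u * w = 1) (H : R⟦X⟧) (k : ℕ) :
    coeff k (H.subst f * (d⁄dX R f * w ^ (k + 1))) = coeff k H := by
  rw [coeff_subst_mul (by simp [hf]), sum_eq_single k]
  · rw [coeff_pow_mul_derivative_mul_pow_succ hf huw le_rfl, if_pos rfl, mul_one]
  · intro m hm hmk
    rw [coeff_pow_mul_derivative_mul_pow_succ hf huw (Nat.le_of_lt_succ (mem_range.mp hm)),
      if_neg hmk, mul_zero]
  · exact fun hk => absurd (self_mem_range_succ k) hk

theorem subst_pow_sub_X_mul_derivative_mul_pow_mul_derivative {φ f u : R⟦X⟧}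
    (hf0 : constantCoeff f = 0) (hu : φ.subst f = u) (hf : f = X * u) (k : ℕ) :
    (φ ^ (k + 1) - X * d⁄dX R φ * φ ^ k).subst f * d⁄dX R f = u ^ (k + 2) := by
  have hsub : HasSubst f := HasSubst.of_constantCoeff_zero' hf0
  have hchain : d⁄dX R u = (d⁄dX R φ).subst f * d⁄dX R f := by
    rw [← hu]
    exact derivative_subst hsub
  have hdf : d⁄dX R f = u + X * d⁄dX R u := by rw [hf, derivative_X_mul]
  rw [subst_sub hsub, subst_mul hsub, subst_mul hsub, subst_pow hsub, subst_pow hsub,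
    subst_X hsub, hu]
  linear_combination (-(d⁄dX R φ).subst f * u ^ k * d⁄dX R f) * hf
    + X * u ^ (k + 1) * hchain + u ^ (k + 1) * hdf

end Substitution

end PowerSeries

open PowerSeries

theorem comp1_eq_subst {K : Type*} [Field K] (φ : K⟦X⟧) {f : K⟦X⟧} (hf : constantCoeff f = 0) :
    comp1 φ f = φ.subst f := by
  ext n
  rw [comp1, coeff_mk, coeff_subst_eq_sum_range hf φ n.lt_succ_self]

/-- **Lagrange inversion formula over an arbitrary field.**
If `φ(0) ≠ 0`, `f(0) = 0` and `f(X) = X · φ(f(X))`, then for every `n ≥ 1`,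
`[Xⁿ] f = [Y^(n-1)] (φ(Y)ⁿ - Y · φ'(Y) · φ(Y)^(n-1))`. -/
theorem lagrange_inversion_arbitrary_field {K : Type*} [Field K]
    (φ f : PowerSeries K)
    (hφ : PowerSeries.constantCoeff φ ≠ 0)
    (hf0 : PowerSeries.constantCoeff f = 0)
    (hf : f = PowerSeries.X * comp1 φ f) :
    ∀ n : ℕ, 1 ≤ n →
      PowerSeries.coeff n f =
        PowerSeries.coeff (n - 1)
          (φ ^ n - PowerSeries.X * PowerSeries.derivative K φ * φ ^ (n - 1)) := by
  intro n hn
  obtain ⟨k, rfl⟩ := Nat.exists_eq_add_of_le' hn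
  rw [Nat.add_sub_cancel]
  obtain ⟨u, hu⟩ : ∃ u, φ.subst f = u := ⟨_, rfl⟩
  rw [comp1_eq_subst φ hf0, hu] at hf
  have huw : u * u⁻¹ = 1 := by
    refine PowerSeries.mul_inv_cancel u ?_
    rwa [← hu, constantCoeff_subst_of_constantCoeff_eq_zero hf0]
  have hH : (φ ^ (k + 1) - X * d⁄dX K φ * φ ^ k).subst f * (d⁄dX K f * u⁻¹ ^ (k + 1)) = u := by
    rw [← mul_assoc, subst_pow_sub_X_mul_derivative_mul_pow_mul_derivative hf0 hu hf,
      pow_succ', mul_assoc, ← mul_pow, huw, one_pow, mul_one]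
  calc coeff (k + 1) f = coeff k u := by rw [hf, coeff_succ_X_mul]
    _ = _ := by rw [← hH, coeff_subst_mul_derivative_mul_pow_succ hf huw]
end

section
/- (Lagrange inversion formula in characteristic 0.) Let K be a field of characteristic 0, let φ(Y) ∈ K[[Y]] be a formal power series with φ(0) ≠ 0, and let f(X) ∈ K[[X]] satisfy f(0) = 0 and f(X) = X·φ(f(X)). Then for every n ≥ 1, the coefficient of X^n in f equals (1/n) times the coefficient of Y^{n-1} in φ(Y)^n. -/
namespace PowerSeries

open Finset

section CommRing

variable {R : Type*} [CommRing R]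

theorem coeff_pow_eq_zero_of_lt_s3 {f : R⟦X⟧} (hf : constantCoeff f = 0) {m j : ℕ} (h : m < j) :
    coeff m (f ^ j) = 0 :=
  X_pow_dvd_iff.mp (pow_dvd_pow_of_dvd (X_dvd_iff.mpr hf) j) m h

theorem coeff_X_mul_derivative (v : R⟦X⟧) (m : ℕ) :
    coeff m (X * d⁄dX R v) = m * coeff m v := by
  cases m with
  | zero => simp
  | succ m =>
    rw [coeff_succ_X_mul, coeff_derivative]
    push_cast
    ring

end CommRing

variable {K : Type*} [Field K]

theorem constantCoeff_comp1 (φ f : K⟦X⟧) : constantCoeff (comp1 φ f) = constantCoeff φ := by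
  simp [comp1]

theorem comp1_eq_subst {φ f : K⟦X⟧} (hf : constantCoeff f = 0) : comp1 φ f = φ.subst f := by
  ext n
  rw [comp1, coeff_mk, coeff_subst' (HasSubst.of_constantCoeff_zero' hf)]
  refine (finsum_eq_sum_of_support_subset _ fun j hj => ?_).symm
  rw [Function.mem_support] at hj
  rw [coe_range, Set.mem_Iio]
  by_contra! h
  exact hj (by rw [coeff_pow_eq_zero_of_lt_s3 hf (by omega), mul_zero])

theorem comp1_pow {φ f : K⟦X⟧} (hf : constantCoeff f = 0) (n : ℕ) :
    comp1 (φ ^ n) f = comp1 φ f ^ n := by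
  simp only [comp1_eq_subst hf, subst_pow (HasSubst.of_constantCoeff_zero' hf)]

theorem X_pow_dvd_comp1_sub_sum {f : K⟦X⟧} (hf : constantCoeff f = 0) (ψ : K⟦X⟧) (n : ℕ) :
    X ^ n ∣ comp1 ψ f - ∑ j ∈ range n, C (coeff j ψ) * f ^ j := by
  refine X_pow_dvd_iff.mpr fun m hm => ?_
  simp only [comp1, map_sub, coeff_mk, map_sum, coeff_C_mul]
  rw [sub_eq_zero]
  refine sum_subset (range_subset_range.mpr (by omega)) fun j hj hjm => ?_
  rw [mem_range] at hj hjm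
  rw [coeff_pow_eq_zero_of_lt_s3 hf (by omega), mul_zero]

theorem coeff_mul_comp1 {f : K⟦X⟧} (hf : constantCoeff f = 0) (g ψ : K⟦X⟧) (m : ℕ) :
    coeff m (g * comp1 ψ f) = ∑ j ∈ range (m + 1), coeff j ψ * coeff m (g * f ^ j) := by
  obtain ⟨r, hr⟩ := X_pow_dvd_comp1_sub_sum hf ψ (m + 1)
  rw [sub_eq_iff_eq_add'.mp hr, mul_add, map_add, mul_left_comm, coeff_X_pow_mul',
    if_neg (by omega), add_zero, mul_sum, map_sum]
  simp only [mul_left_comm g, coeff_C_mul]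

variable [CharZero K]

theorem coeff_derivative_X_mul_mul_inv_pow {u : K⟦X⟧} (hu : constantCoeff u ≠ 0) (m : ℕ) :
    coeff m (d⁄dX K (X * u) * u⁻¹ ^ (m + 1)) = if m = 0 then 1 else 0 := by
  have hinv : u * u⁻¹ = 1 := PowerSeries.mul_inv_cancel u hu
  have hsplit : d⁄dX K (X * u) * u⁻¹ ^ (m + 1) = u⁻¹ ^ m + X * d⁄dX K u * u⁻¹ ^ (m + 1) := by
    rw [Derivation.leibniz, derivative_X, smul_eq_mul, smul_eq_mul]
    linear_combination u⁻¹ ^ m * hinv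
  rw [hsplit, map_add]
  rcases m with _ | m
  · simp
  · have hderiv : X * d⁄dX K (u⁻¹ ^ (m + 1)) =
        C (-(m + 1 : K)) * (X * d⁄dX K u * u⁻¹ ^ (m + 2)) := by
      rw [derivative_pow, derivative_inv', Nat.add_sub_cancel, map_neg, map_add, map_natCast,
        map_one]
      push_cast
      ring
    have hcoeff := coeff_X_mul_derivative (u⁻¹ ^ (m + 1)) (m + 1)
    rw [hderiv, coeff_C_mul] at hcoeff
    have hm : (m + 1 : K) ≠ 0 := Nat.cast_add_one_ne_zero m
    have hresidue :
        coeff (m + 1) (X * d⁄dX K u * u⁻¹ ^ (m + 2)) = -coeff (m + 1) (u⁻¹ ^ (m + 1)) :=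
      mul_left_cancel₀ hm (by push_cast at hcoeff; linear_combination -hcoeff)
    rw [hresidue, add_neg_cancel, if_neg m.succ_ne_zero]

theorem coeff_derivative_X_mul_mul_inv_pow_mul_pow {u : K⟦X⟧} (hu : constantCoeff u ≠ 0)
    {j m : ℕ} (hjm : j ≤ m) :
    coeff m (d⁄dX K (X * u) * u⁻¹ ^ (m + 1) * (X * u) ^ j) = if j = m then 1 else 0 := by
  obtain ⟨k, rfl⟩ := Nat.exists_eq_add_of_le hjm
  have hcancel : u⁻¹ ^ j * u ^ j = 1 := by rw [← mul_pow, PowerSeries.inv_mul_cancel u hu, one_pow]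
  have hfactor : d⁄dX K (X * u) * u⁻¹ ^ (j + k + 1) * (X * u) ^ j =
      X ^ j * (d⁄dX K (X * u) * u⁻¹ ^ (k + 1)) := by
    linear_combination X ^ j * d⁄dX K (X * u) * u⁻¹ ^ (k + 1) * hcancel
  rw [hfactor, coeff_X_pow_mul', if_pos (by omega), Nat.add_sub_cancel_left,
    coeff_derivative_X_mul_mul_inv_pow hu]
  simp

end PowerSeries

open PowerSeries in
/-- **Lagrange inversion formula in characteristic zero.**
If `φ(0) ≠ 0`, `f(0) = 0` and `f(X) = X · φ(f(X))`, then for every `n ≥ 1`,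
`[Xⁿ] f = (1/n) · [Y^(n-1)] (φ(Y)ⁿ)`. -/
theorem lagrange_inversion_char_zero {K : Type*} [Field K] [CharZero K]
    (φ f : PowerSeries K)
    (hφ : PowerSeries.constantCoeff φ ≠ 0)
    (hf0 : PowerSeries.constantCoeff f = 0)
    (hf : f = PowerSeries.X * comp1 φ f) :
    ∀ n : ℕ, 1 ≤ n →
      PowerSeries.coeff n f =
        (1 / (n : K)) * PowerSeries.coeff (n - 1) (φ ^ n) := by
  intro n hn
  obtain ⟨m, rfl⟩ := Nat.exists_eq_add_of_le' hn
  set u := comp1 φ f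
  have hu : constantCoeff u ≠ 0 := by rwa [constantCoeff_comp1]
  have hcoeff : coeff m (d⁄dX K f) = coeff m (φ ^ (m + 1)) := calc
    coeff m (d⁄dX K f) = coeff m (d⁄dX K f * u⁻¹ ^ (m + 1) * comp1 (φ ^ (m + 1)) f) := by
      rw [comp1_pow hf0, mul_assoc, ← mul_pow, PowerSeries.inv_mul_cancel u hu, one_pow, mul_one]
    _ = ∑ j ∈ Finset.range (m + 1),
          coeff j (φ ^ (m + 1)) * coeff m (d⁄dX K f * u⁻¹ ^ (m + 1) * f ^ j) :=
      coeff_mul_comp1 hf0 _ _ m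
    _ = coeff m (φ ^ (m + 1)) := by
      rw [Finset.sum_eq_single_of_mem m (Finset.self_mem_range_succ m) fun j hj hjm => ?_]
      · rw [hf, coeff_derivative_X_mul_mul_inv_pow_mul_pow hu le_rfl, if_pos rfl, mul_one]
      · rw [hf, coeff_derivative_X_mul_mul_inv_pow_mul_pow hu (Finset.mem_range_succ_iff.mp hj),
          if_neg hjm, mul_zero]
  rw [coeff_derivative] at hcoeff
  rw [Nat.add_sub_cancel, ← hcoeff, Nat.cast_add_one]
  field_simp
end

section
/- (Furstenberg-type diagonal formula over an arbitrary field.) Let K be an arbitrary field, let Q(X,Y) ∈ K[[X,Y]], and let f(X) ∈ K[[X]] satisfy f(0) = 0, Q(X, f(X)) = 0, and Q'_Y(0,0) ≠ 0. Let Q(XY,Y) ∈ K[[X,Y]] denote the power series obtained from Q by substituting XY for X. Then there exists a unique S(X,Y) ∈ K[[X,Y]] with S(X,Y)·Q(XY,Y) = Y^2·Q'_Y(XY,Y), and for every n ≥ 0 the coefficient of X^n in f equals the coefficient of X^n Y^n in S; i.e., f(X) = 𝒟(Y^2 Q'_Y(XY,Y)/Q(XY,Y)) where 𝒟 denotes the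 diagonal. -/
/-- Substitution `X ↦ XY`, `Y ↦ Y` in a two-variable power series:
the monomial `X^i Y^j` is sent to `X^i Y^(i+j)`. -/
noncomputable def substXY {K : Type*} [Field K] (Q : MvPowerSeries (Fin 2) K) :
    MvPowerSeries (Fin 2) K :=
  fun d => if d 0 ≤ d 1 then
    MvPowerSeries.coeff (Finsupp.single 0 (d 0) + Finsupp.single 1 (d 1 - d 0)) Q
  else 0

namespace Furstenberg

open Finset MvPowerSeries

section Coefficients

variable {R : Type*} [CommSemiring R]

noncomputable def idx (a b : ℕ) : Fin 2 →₀ ℕ := Finsupp.single 0 a + Finsupp.single 1 b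

@[simp] lemma idx_apply_zero (a b : ℕ) : idx a b 0 = a := by simp [idx]

@[simp] lemma idx_apply_one (a b : ℕ) : idx a b 1 = b := by simp [idx]

lemma idx_eta (d : Fin 2 →₀ ℕ) : idx (d 0) (d 1) = d := by
  ext i; fin_cases i <;> simp

lemma idx_inj {a b c d : ℕ} : idx a b = idx c d ↔ a = c ∧ b = d := by
  refine ⟨fun h => ⟨by simpa using congr($h 0), by simpa using congr($h 1)⟩, ?_⟩
  rintro ⟨rfl, rfl⟩; rfl

lemma idx_add (a b c d : ℕ) : idx a b + idx c d = idx (a + c) (b + d) := by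
  ext i; fin_cases i <;> simp

lemma ext_idx {φ ψ : MvPowerSeries (Fin 2) R}
    (h : ∀ a b, coeff (idx a b) φ = coeff (idx a b) ψ) : φ = ψ := by
  ext d; rw [← idx_eta d]; exact h _ _

lemma of_mem_antidiagonal_idx {a b : ℕ} {p : (Fin 2 →₀ ℕ) × (Fin 2 →₀ ℕ)}
    (hp : p ∈ antidiagonal (idx a b)) :
    p.1 0 ≤ a ∧ p.1 1 ≤ b ∧ idx (a - p.1 0) (b - p.1 1) = p.2 := by
  have h0 := congr($((mem_antidiagonal.mp hp)) 0)
  have h1 := congr($((mem_antidiagonal.mp hp)) 1)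
  simp only [Finsupp.add_apply, idx_apply_zero, idx_apply_one] at h0 h1
  refine ⟨by omega, by omega, ?_⟩
  rw [← idx_eta p.2]; congr 1 <;> omega

lemma coeff_X_one_pow_mul (k : ℕ) (φ : MvPowerSeries (Fin 2) R) (a b : ℕ) :
    coeff (idx a b) (X 1 ^ k * φ) = if k ≤ b then coeff (idx a (b - k)) φ else 0 := by
  rw [X_pow_eq, coeff_monomial_mul, one_mul]
  have hle : Finsupp.single 1 k ≤ idx a b ↔ k ≤ b := by
    refine ⟨fun h => by simpa using h 1, fun h i => ?_⟩
    fin_cases i <;> simp [h]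
  by_cases h : k ≤ b
  · rw [if_pos (hle.mpr h), if_pos h]
    congr 2
    ext i; fin_cases i <;> simp
  · rw [if_neg (mt hle.mp h), if_neg h]

lemma coeff_idx_toMvPowerSeries (f : PowerSeries R) (a b : ℕ) :
    coeff (idx a b) (f.toMvPowerSeries 0) = if b = 0 then PowerSeries.coeff a f else 0 := by
  rw [PowerSeries.toMvPowerSeries_apply]
  split_ifs with hb
  · subst hb
    have : idx a 0 = Finsupp.embDomain (Function.Embedding.punit 0) (Finsupp.single () a) := by
      simp [idx]; rfl
    rw [this]
    exact coeff_embDomain_rename (Function.Embedding.punit 0) f _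
  · refine coeff_rename_eq_zero _ _ fun ⟨x, hx⟩ => hb ?_
    simpa [Finsupp.mapDomain_of_notMem_range] using congr($hx 1).symm

lemma pderiv_one_toMvPowerSeries_zero (f : PowerSeries R) :
    pderiv R (1 : Fin 2) (f.toMvPowerSeries 0) = 0 := by
  refine ext_idx fun a b => ?_
  rw [coeff_pderiv, show idx a b + Finsupp.single 1 1 = idx a (b + 1) by simp [idx, add_assoc],
    coeff_idx_toMvPowerSeries]
  simp

lemma coeff_mul_idx (φ ψ : MvPowerSeries (Fin 2) R) (a b : ℕ) :
    coeff (idx a b) (φ * ψ) = ∑ i ∈ range (a + 1), ∑ j ∈ range (b + 1),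
      coeff (idx i j) φ * coeff (idx (a - i) (b - j)) ψ := by
  rw [coeff_mul, ← sum_product']
  refine sum_nbij' (fun p => (p.1 0, p.1 1)) (fun p => (idx p.1 p.2, idx (a - p.1) (b - p.2)))
    ?_ ?_ ?_ ?_ ?_
  · intro p hp
    obtain ⟨ha, hb, -⟩ := of_mem_antidiagonal_idx hp
    simp only [mem_product, mem_range]
    omega
  · intro q hq
    simp only [mem_product, mem_range] at hq
    rw [HasAntidiagonal.mem_antidiagonal, idx_add]
    congr 1 <;> omega
  · intro p hp
    obtain ⟨-, -, h⟩ := of_mem_antidiagonal_idx hp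
    simp [idx_eta, h]
  · intro q _
    simp
  · intro p hp
    obtain ⟨-, -, h⟩ := of_mem_antidiagonal_idx hp
    simp [idx_eta, h]

end Coefficients

section Columns

variable {R : Type*} [CommSemiring R]

noncomputable def coeffY (b : ℕ) (φ : MvPowerSeries (Fin 2) R) : PowerSeries R :=
  PowerSeries.mk fun a => coeff (idx a b) φ

@[simp] lemma coeff_coeffY (a b : ℕ) (φ : MvPowerSeries (Fin 2) R) :
    PowerSeries.coeff a (coeffY b φ) = coeff (idx a b) φ :=
  PowerSeries.coeff_mk _ _

lemma ext_coeffY {φ ψ : MvPowerSeries (Fin 2) R} (h : ∀ b, coeffY b φ = coeffY b ψ) : φ = ψ :=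
  ext_idx fun a b => by simpa using congr(PowerSeries.coeff a $(h b))

lemma coeffY_sub {R : Type*} [CommRing R] (b : ℕ) (φ ψ : MvPowerSeries (Fin 2) R) :
    coeffY b (φ - ψ) = coeffY b φ - coeffY b ψ := by
  ext a; simp

lemma coeffY_zero_X_one_mul (φ : MvPowerSeries (Fin 2) R) : coeffY 0 (X 1 * φ) = 0 := by
  ext a; simpa using coeff_X_one_pow_mul 1 φ a 0

lemma coeffY_succ_X_one_mul (b : ℕ) (φ : MvPowerSeries (Fin 2) R) :
    coeffY (b + 1) (X 1 * φ) = coeffY b φ := by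
  ext a; simpa using coeff_X_one_pow_mul 1 φ a (b + 1)

lemma coeffY_toMvPowerSeries_mul (b : ℕ) (f : PowerSeries R) (φ : MvPowerSeries (Fin 2) R) :
    coeffY b (f.toMvPowerSeries 0 * φ) = f * coeffY b φ := by
  ext a
  rw [coeff_coeffY, coeff_mul_idx, PowerSeries.coeff_mul,
    Nat.sum_antidiagonal_eq_sum_range_succ_mk]
  refine sum_congr rfl fun i _ => ?_
  rw [sum_eq_single 0 (fun j _ hj => by simp [coeff_idx_toMvPowerSeries, hj]) (by simp)]
  simp [coeff_idx_toMvPowerSeries]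

lemma coeff_mul_pow_of_lt {f : PowerSeries R} (hf : PowerSeries.constantCoeff f = 0)
    (c : PowerSeries R) {a j : ℕ} (h : a < j) : PowerSeries.coeff a (c * f ^ j) = 0 :=
  PowerSeries.X_pow_dvd_iff.mp
    (Dvd.dvd.mul_left (pow_dvd_pow_of_dvd (PowerSeries.X_dvd_iff.mpr hf) j) c) a h

lemma coeff_sum_range_mul_pow {f : PowerSeries R} (hf : PowerSeries.constantCoeff f = 0)
    (c : ℕ → PowerSeries R) {a N : ℕ} (h : a < N) :
    PowerSeries.coeff a (∑ j ∈ range N, c j * f ^ j) =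
      PowerSeries.coeff a (∑ j ∈ range (a + 1), c j * f ^ j) := by
  have htail : PowerSeries.coeff a (∑ j ∈ Ico (a + 1) N, c j * f ^ j) = 0 := by
    rw [map_sum]
    exact sum_eq_zero fun j hj => coeff_mul_pow_of_lt hf _ (by simp at hj; omega)
  rw [← sum_range_add_sum_Ico _ h, map_add, htail, add_zero]

/-- `Q_l(X, f(X))` for `Q_l = ∑ⱼ q_{l+j}(X) Yʲ`, where `qⱼ = coeffY j Q`. Cutting the sum at
`j ≤ a` is exact for the coefficient of `Xᵃ` once `f(0) = 0` (`coeff_evalTail`). -/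
noncomputable def evalTail (Q : MvPowerSeries (Fin 2) R) (f : PowerSeries R) (l : ℕ) :
    PowerSeries R :=
  PowerSeries.mk fun a => PowerSeries.coeff a (∑ j ∈ range (a + 1), coeffY (l + j) Q * f ^ j)

variable {f : PowerSeries R}

lemma coeff_evalTail (hf : PowerSeries.constantCoeff f = 0) (Q : MvPowerSeries (Fin 2) R)
    (l : ℕ) {a N : ℕ} (h : a < N) :
    PowerSeries.coeff a (evalTail Q f l) =
      PowerSeries.coeff a (∑ j ∈ range N, coeffY (l + j) Q * f ^ j) := by
  rw [evalTail, PowerSeries.coeff_mk, coeff_sum_range_mul_pow hf _ h]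

lemma evalTail_eq_add (hf : PowerSeries.constantCoeff f = 0) (Q : MvPowerSeries (Fin 2) R)
    (l : ℕ) : evalTail Q f l = coeffY l Q + f * evalTail Q f (l + 1) := by
  ext a
  have htail : PowerSeries.coeff a (f * evalTail Q f (l + 1)) =
      PowerSeries.coeff a (f * ∑ j ∈ range (a + 1), coeffY (l + 1 + j) Q * f ^ j) := by
    simp only [PowerSeries.coeff_mul]
    refine sum_congr rfl fun p hp => ?_
    rw [coeff_evalTail hf Q _ (N := a + 1) (by have := mem_antidiagonal.mp hp; omega)]
  rw [coeff_evalTail hf Q l (show a < a + 2 by omega), map_add, htail, sum_range_succ', mul_sum,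
    add_comm, map_add]
  congr 2
  · simp
  · refine sum_congr rfl fun j _ => ?_
    rw [pow_succ', show l + (j + 1) = l + 1 + j by omega]
    ring

end Columns

section Factorization

variable {K : Type*} [Field K]

lemma substY_eq_evalTail_zero (Q : MvPowerSeries (Fin 2) K) (f : PowerSeries K) :
    substY Q f = evalTail Q f 0 := by
  ext a
  rw [substY, evalTail, PowerSeries.coeff_mk, PowerSeries.coeff_mk, map_sum, sum_comm]
  refine sum_congr rfl fun j _ => ?_
  rw [PowerSeries.coeff_mul, Nat.sum_antidiagonal_eq_sum_range_succ_mk]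
  simp [idx]

/-- From `Yʲ - fʲ = (Y - f) ∑_{l<j} Yˡ f^(j-1-l)`: the `Yˡ`-coefficient of `U` in
`Q - Q(X, f) = (Y - f) U` is `Q_{l+1}(X, f(X))`. -/
noncomputable def cofactor (Q : MvPowerSeries (Fin 2) K) (f : PowerSeries K) :
    MvPowerSeries (Fin 2) K :=
  fun d => PowerSeries.coeff (d 0) (evalTail Q f (d 1 + 1))

lemma coeffY_cofactor (Q : MvPowerSeries (Fin 2) K) (f : PowerSeries K) (l : ℕ) :
    coeffY l (cofactor Q f) = evalTail Q f (l + 1) := by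
  ext a; simp [cofactor, coeff_apply]

lemma constantCoeff_cofactor (Q : MvPowerSeries (Fin 2) K) (f : PowerSeries K) :
    constantCoeff (cofactor Q f) = coeff (idx 0 1) Q := by
  rw [← coeff_zero_eq_constantCoeff_apply, show (0 : Fin 2 →₀ ℕ) = idx 0 0 by simp [idx],
    ← coeff_coeffY, coeffY_cofactor, evalTail, PowerSeries.coeff_mk]
  simp

theorem eq_mul_cofactor {Q : MvPowerSeries (Fin 2) K} {f : PowerSeries K}
    (hf : PowerSeries.constantCoeff f = 0) (hQf : substY Q f = 0) :
    Q = (X 1 - f.toMvPowerSeries 0) * cofactor Q f := by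
  refine ext_coeffY fun b => ?_
  rw [sub_mul, coeffY_sub, coeffY_toMvPowerSeries_mul, coeffY_cofactor]
  cases b with
  | zero =>
    have := evalTail_eq_add hf Q 0
    rw [← substY_eq_evalTail_zero, hQf] at this
    rw [coeffY_zero_X_one_mul]
    linear_combination -this
  | succ b =>
    rw [coeffY_succ_X_one_mul, coeffY_cofactor, evalTail_eq_add hf Q (b + 1)]
    ring

end Factorization

section Substitution

variable {K : Type*} [Field K]

lemma coeff_idx_substXY (Q : MvPowerSeries (Fin 2) K) (a b : ℕ) :
    coeff (idx a b) (substXY Q) = if a ≤ b then coeff (idx a (b - a)) Q else 0 := by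
  simp [substXY, idx, coeff_apply]

lemma hasSubst_XY : HasSubst ![(X 0 * X 1 : MvPowerSeries (Fin 2) K), X 1] :=
  hasSubst_of_constantCoeff_zero fun s => by fin_cases s <;> simp

lemma prod_pow_XY_eq_monomial (d : Fin 2 →₀ ℕ) :
    (d.prod fun s e => (![(X 0 * X 1 : MvPowerSeries (Fin 2) K), X 1] s) ^ e) =
      monomial (idx (d 0) (d 0 + d 1)) 1 := by
  rw [Finsupp.prod_fintype _ _ (by simp), Fin.prod_univ_two]
  simp only [Matrix.cons_val_zero, Matrix.cons_val_one, mul_pow, X_pow_eq,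
    monomial_mul_monomial, mul_one, idx, Finsupp.single_add, add_assoc]

lemma substXY_eq_subst (Q : MvPowerSeries (Fin 2) K) :
    substXY Q = subst ![X 0 * X 1, X 1] Q := by
  refine ext_idx fun a b => ?_
  rw [coeff_idx_substXY, coeff_subst hasSubst_XY]
  simp only [prod_pow_XY_eq_monomial, coeff_monomial, idx_inj, smul_eq_mul, mul_ite, mul_one, mul_zero]
  split_ifs with hab
  · rw [finsum_eq_single _ (idx a (b - a))]
    · simp [show a + (b - a) = b by omega]
    · intro d hd
      rw [if_neg]
      rintro ⟨rfl, rfl⟩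
      exact hd (by rw [← idx_eta d]; simp)
  · refine (finsum_eq_zero_of_forall_eq_zero fun d => if_neg ?_).symm
    omega

noncomputable def substXYAlgHom : MvPowerSeries (Fin 2) K →ₐ[K] MvPowerSeries (Fin 2) K :=
  substAlgHom hasSubst_XY

@[simp] lemma substXYAlgHom_apply (Q : MvPowerSeries (Fin 2) K) :
    substXYAlgHom Q = substXY Q := by
  rw [substXY_eq_subst, substXYAlgHom, coe_substAlgHom]

lemma substXY_X_one : substXY (X 1 : MvPowerSeries (Fin 2) K) = X 1 := by
  rw [substXY_eq_subst, subst_X hasSubst_XY]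
  rfl

lemma coeff_idx_substXY_toMvPowerSeries (f : PowerSeries K) (a b : ℕ) :
    coeff (idx a b) (substXY (f.toMvPowerSeries 0)) =
      if a = b then PowerSeries.coeff a f else 0 := by
  rw [coeff_idx_substXY, coeff_idx_toMvPowerSeries]
  split_ifs <;> first | rfl | omega

end Substitution

section Geometric

variable {K : Type*} [Field K]

/-- The expansion `Y / (Y - f(XY)) = ∑ₖ (f(XY) / Y)ᵏ`. -/
noncomputable def geomDiag (f : PowerSeries K) : MvPowerSeries (Fin 2) K :=
  fun d => if d 1 ≤ d 0 then PowerSeries.coeff (d 0) (f ^ (d 0 - d 1)) else 0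

lemma coeff_idx_geomDiag (f : PowerSeries K) (a b : ℕ) :
    coeff (idx a b) (geomDiag f) = if b ≤ a then PowerSeries.coeff a (f ^ (a - b)) else 0 := by
  simp [geomDiag, coeff_apply]

variable {f : PowerSeries K}

lemma coeff_substXY_toMvPowerSeries_mul_geomDiag (hf : PowerSeries.constantCoeff f = 0)
    (a b : ℕ) :
    coeff (idx a b) (substXY (f.toMvPowerSeries 0) * geomDiag f) =
      if b ≤ a then PowerSeries.coeff a (f ^ (a - b + 1)) else 0 := by
  simp only [coeff_mul_idx, coeff_idx_substXY_toMvPowerSeries, coeff_idx_geomDiag, ite_mul,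
    zero_mul, sum_ite_eq, mem_range]
  split_ifs with hba
  · rw [pow_succ', PowerSeries.coeff_mul, Nat.sum_antidiagonal_eq_sum_range_succ_mk]
    refine sum_congr rfl fun i hi => ?_
    rw [mem_range] at hi
    by_cases hib : i < b + 1
    · rw [if_pos hib, if_pos (by omega), show a - i - (b - i) = a - b by omega]
    · rw [if_neg hib, ← one_mul (f ^ (a - b)), coeff_mul_pow_of_lt hf _ (by omega), mul_zero]
  · exact sum_eq_zero fun i hi => by
      rw [mem_range] at hi
      rw [if_pos (by omega), if_neg (by omega), mul_zero]

theorem sub_mul_geomDiag (hf : PowerSeries.constantCoeff f = 0) :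
    (X 1 - substXY (f.toMvPowerSeries 0)) * geomDiag f = X 1 := by
  refine ext_idx fun a b => ?_
  rw [sub_mul, map_sub, coeff_substXY_toMvPowerSeries_mul_geomDiag hf,
    ← pow_one (X 1 : MvPowerSeries (Fin 2) K), coeff_X_one_pow_mul, coeff_idx_geomDiag,
    ← mul_one (X 1 ^ 1 : MvPowerSeries (Fin 2) K), coeff_X_one_pow_mul, coeff_one]
  have hidx : idx a (b - 1) = 0 ↔ a = 0 ∧ b - 1 = 0 := by
    rw [← idx_inj (c := 0) (d := 0)]; simp [idx]
  rcases Nat.eq_zero_or_pos b with rfl | hb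
  · rw [← one_mul (f ^ (a - 0 + 1)), coeff_mul_pow_of_lt hf _ (by omega)]
    simp
  rw [if_pos (show 1 ≤ b from hb), if_pos (show 1 ≤ b from hb)]
  simp only [hidx]
  rcases lt_or_ge a b with hab | hba
  · rw [if_neg (show ¬b ≤ a by omega), sub_zero]
    by_cases hb' : b = a + 1
    · subst hb'
      simp [PowerSeries.coeff_one]
    · rw [if_neg (by omega), if_neg (by omega)]
  · rw [if_pos (by omega), if_pos hba, show a - (b - 1) = a - b + 1 by omega, sub_self,
      if_neg (by omega)]

lemma coeff_diag_X_one_mul_geomDiag (hf : PowerSeries.constantCoeff f = 0) (n : ℕ) :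
    coeff (idx n n) (X 1 * geomDiag f) = PowerSeries.coeff n f := by
  rw [← pow_one (X 1 : MvPowerSeries (Fin 2) K), coeff_X_one_pow_mul, coeff_idx_geomDiag]
  rcases n with _ | n
  · simp [hf]
  · simp

lemma coeff_diag_X_one_sq_mul_substXY (P : MvPowerSeries (Fin 2) K) (n : ℕ) :
    coeff (idx n n) (X 1 ^ 2 * substXY P) = 0 := by
  rw [coeff_X_one_pow_mul, coeff_idx_substXY]
  split_ifs <;> first | rfl | omega

end Geometric

section Solution

variable {K : Type*} [Field K]

lemma pderivY_eq_pderiv (P : MvPowerSeries (Fin 2) K) : pderivY P = pderiv K 1 P := by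
  ext d
  rw [coeff_pderiv, mul_comm]
  simp [pderivY, coeff_apply]

theorem mul_substXY_of_eq_mul {Q U : MvPowerSeries (Fin 2) K} {f : PowerSeries K}
    (hf : PowerSeries.constantCoeff f = 0) (hQ : Q = (X 1 - f.toMvPowerSeries 0) * U)
    (hU : constantCoeff U ≠ 0) :
    (X 1 * geomDiag f + X 1 ^ 2 * substXY (pderiv K 1 U * U⁻¹)) * substXY Q =
      X 1 ^ 2 * substXY (pderivY Q) := by
  subst hQ
  have hUinv : substXY U * substXY U⁻¹ = 1 := by
    simpa only [map_mul, map_one, substXYAlgHom_apply] using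
      congr(substXYAlgHom $(MvPowerSeries.mul_inv_cancel U hU))
  rw [pderivY_eq_pderiv, Derivation.leibniz, map_sub, pderiv_X_self,
    pderiv_one_toMvPowerSeries_zero, sub_zero, smul_eq_mul, smul_eq_mul, mul_one]
  simp only [← substXYAlgHom_apply, map_mul, map_add, map_sub]
  simp only [substXYAlgHom_apply, substXY_X_one]
  linear_combination (X 1 * substXY U) * sub_mul_geomDiag hf +
    (X 1 ^ 2 * (X 1 - substXY (f.toMvPowerSeries 0)) * substXY (pderiv K 1 U)) * hUinv

end Solution

end Furstenberg

open Furstenberg MvPowerSeries in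
/-- **Furstenberg-type diagonal formula over an arbitrary field.**
If `f(0) = 0`, `Q(X, f(X)) = 0` and `Q'_Y(0,0) ≠ 0`, then there is a unique
power series `S` with `S · Q(XY,Y) = Y² · Q'_Y(XY,Y)`, and for every `n` the
coefficient of `Xⁿ` in `f` equals the coefficient of `Xⁿ Yⁿ` in `S`; that is,
`f(X) = 𝒟(Y² Q'_Y(XY,Y) / Q(XY,Y))`. -/
theorem furstenberg_diagonal {K : Type*} [Field K]
    (Q : MvPowerSeries (Fin 2) K) (f : PowerSeries K)
    (hf0 : PowerSeries.constantCoeff f = 0)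
    (hQf : substY Q f = 0)
    (hQY : MvPowerSeries.coeff (Finsupp.single 1 1) Q ≠ 0) :
    (∃! S : MvPowerSeries (Fin 2) K,
      S * substXY Q = MvPowerSeries.X 1 ^ 2 * substXY (pderivY Q)) ∧
    ∀ S : MvPowerSeries (Fin 2) K,
      S * substXY Q = MvPowerSeries.X 1 ^ 2 * substXY (pderivY Q) →
      ∀ n : ℕ,
        PowerSeries.coeff n f =
          MvPowerSeries.coeff (Finsupp.single 0 n + Finsupp.single 1 n) S := by
  have hQY' : coeff (idx 0 1) Q ≠ 0 := by simpa [idx] using hQY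
  set S₀ := X 1 * geomDiag f + X 1 ^ 2 * substXY (pderiv K 1 (cofactor Q f) * (cofactor Q f)⁻¹)
  have hS₀ : S₀ * substXY Q = X 1 ^ 2 * substXY (pderivY Q) :=
    mul_substXY_of_eq_mul hf0 (eq_mul_cofactor hf0 hQf) (by rwa [constantCoeff_cofactor])
  have hQXY : substXY Q ≠ 0 := fun h =>
    hQY' (by simpa [coeff_idx_substXY] using congr(coeff (idx 0 1) $h))
  have huniq : ∀ S, S * substXY Q = X 1 ^ 2 * substXY (pderivY Q) → S = S₀ :=
    fun S hS => mul_right_cancel₀ hQXY (hS.trans hS₀.symm)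
  refine ⟨⟨S₀, hS₀, huniq⟩, fun S hS n => ?_⟩
  change _ = coeff (idx n n) S
  rw [huniq S hS, map_add, coeff_diag_X_one_mul_geomDiag hf0, coeff_diag_X_one_sq_mul_substXY,
    add_zero]
end
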